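/- arXiv:2008.01020 — 2 statements merged into one kernel-verified Lean document; each statement's English description precedes it below -/
import Mathlib

section
/- Let N ≥ 2, n ≥ 2, and let χ⁽¹⁾,…,χ⁽ⁿ⁾ be the vanishing-order sequences of n nonzero partitions of N. Define b : {2,…,N} → {0,1} by b_k = 1 if and only if ∑_{i=1}^{n} χ⁽ⁱ⁾_k ≤ (n−1)k. Then b is of initial-segment type or of alternating type. -/
/-!
Put `a_k = ∑ᵢ (k − χ⁽ⁱ⁾_k)` (`gapSum`), so that `b_k = 1` iff `k ≤ a_k`; since `χ_2 = 1`
for a nonzero partition, `a_2 = n ≥ 2`. Everything rests on one local fact: if `χ` is constant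
on `k, …, k + m`, the part `p_{χ_k}` exceeds `m`, and so do all earlier parts. This bounds `χ_k`
by `(k + m)/(m + 1)` in a flat stretch, which (after a weighted count that uses integrality)
shows `b_{k+2} = 1 ⇒ b_k = 1`; and it shows that a flat step at `k + 2` forces
`χ_{k+2} ≤ χ_k + 1`, whence `a_k + a_{k+3} ≤ 2 a_{k+2}` and `b_k = b_{k+3} = 1 ⇒ b_{k+2} = 1`.
If `b_3 = 0`, the first implication kills every odd `k` and makes the even `k` with `b_k = 1`
an initial segment of the even numbers. If `b_3 = 1`, the two implications together give
`b_{k+1} = 1 ⇒ b_k = 1`, so `b` is of initial-segment type.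
-/

/-- `p` (with parts indexed from 1) is a partition of `N`: the parts are
nonincreasing, sum to `N`, and vanish beyond index `N`. -/
def IsPartitionOf (N : ℕ) (p : ℕ → ℕ) : Prop :=
  (∀ i, 1 ≤ i → p (i + 1) ≤ p i) ∧
  (∑ j ∈ Finset.Icc 1 N, p j = N) ∧
  (∀ i, N < i → p i = 0)

/-- The vanishing order at `k` of the partition `p`: the least positive
integer `i` such that `p 1 + ⋯ + p i ≥ k`. -/
noncomputable def chiOf (p : ℕ → ℕ) (k : ℕ) : ℕ :=
  sInf {i | 1 ≤ i ∧ k ≤ ∑ j ∈ Finset.Icc 1 i, p j}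

/-- `χ` is the vanishing-order sequence, on `{1,…,N}`, of the partition `p` of `N`. -/
def IsVanishingOrderSeq (N : ℕ) (p : ℕ → ℕ) (χ : ℕ → ℕ) : Prop :=
  IsPartitionOf N p ∧ ∀ k, 1 ≤ k → k ≤ N → χ k = chiOf p k

open Finset

def partialSum (p : ℕ → ℕ) (i : ℕ) : ℕ := ∑ j ∈ Icc 1 i, p j

@[simp]
lemma partialSum_zero (p : ℕ → ℕ) : partialSum p 0 = 0 := by
  simp [partialSum]

lemma partialSum_succ (p : ℕ → ℕ) (i : ℕ) :
    partialSum p (i + 1) = partialSum p i + p (i + 1) :=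
  sum_Icc_succ_top (Nat.le_add_left 1 i) p

lemma partialSum_one (p : ℕ → ℕ) : partialSum p 1 = p 1 := by
  simp [partialSum]

lemma partialSum_mono (p : ℕ → ℕ) : Monotone (partialSum p) := fun _ _ h =>
  sum_le_sum_of_subset (Icc_subset_Icc_right h)

namespace IsPartitionOf

variable {N : ℕ} {p : ℕ → ℕ}

lemma partialSum_self (hp : IsPartitionOf N p) : partialSum p N = N := hp.2.1

lemma part_antitone (hp : IsPartitionOf N p) {i j : ℕ} (hi : 1 ≤ i) (hij : i ≤ j) :
    p j ≤ p i := by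
  induction j, hij using Nat.le_induction with
  | base => exact le_rfl
  | succ j hj ih => exact (hp.1 j (hi.trans hj)).trans ih

lemma part_pos_of_partialSum_lt (hp : IsPartitionOf N p) {i : ℕ} (hi : partialSum p i < N) :
    0 < p (i + 1) := by
  by_contra! hzero
  have hconst : ∀ j, i ≤ j → partialSum p j = partialSum p i := by
    intro j hj
    induction j, hj using Nat.le_induction with
    | base => rfl
    | succ j hj ih =>
      have := hp.part_antitone (i := i + 1) (j := j + 1) (by omega) (by omega)
      rw [partialSum_succ, ih]
      omega
  have := partialSum_mono p (Nat.le_add_left N i)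
  rw [hconst (i + N) (Nat.le_add_right i N), hp.partialSum_self] at this
  omega

lemma mul_part_succ_le_partialSum (hp : IsPartitionOf N p) (i : ℕ) :
    i * p (i + 1) ≤ partialSum p i := by
  calc i * p (i + 1) = ∑ _j ∈ Icc 1 i, p (i + 1) := by simp
    _ ≤ partialSum p i := sum_le_sum fun j hj => by
      rw [mem_Icc] at hj
      exact hp.part_antitone hj.1 (by omega)

lemma chiOf_le_iff (hp : IsPartitionOf N p) {k i : ℕ} (hk : 1 ≤ k) (hkN : k ≤ N) :
    chiOf p k ≤ i ↔ k ≤ partialSum p i := by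
  have hmem : chiOf p k ∈ {i | 1 ≤ i ∧ k ≤ partialSum p i} :=
    Nat.sInf_mem ⟨N, by omega, hkN.trans hp.partialSum_self.ge⟩
  refine ⟨fun h => hmem.2.trans (partialSum_mono p h), fun h => Nat.sInf_le ⟨?_, h⟩⟩
  rcases Nat.eq_zero_or_pos i with rfl | hi
  · rw [partialSum_zero] at h
    omega
  · exact hi

lemma chiOf_pos (hp : IsPartitionOf N p) {k : ℕ} (hk : 1 ≤ k) (hkN : k ≤ N) :
    0 < chiOf p k := by
  by_contra! h
  rw [hp.chiOf_le_iff hk hkN, partialSum_zero] at h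
  omega

lemma chiOf_mono (hp : IsPartitionOf N p) {k k' : ℕ} (hk : 1 ≤ k) (hkk' : k ≤ k')
    (hk'N : k' ≤ N) : chiOf p k ≤ chiOf p k' :=
  (hp.chiOf_le_iff hk (hkk'.trans hk'N)).2
    (hkk'.trans ((hp.chiOf_le_iff (hk.trans hkk') hk'N).1 le_rfl))

lemma chiOf_succ_le (hp : IsPartitionOf N p) {k : ℕ} (hk : 1 ≤ k) (hkN : k + 1 ≤ N) :
    chiOf p (k + 1) ≤ chiOf p k + 1 := by
  have hS := (hp.chiOf_le_iff hk (by omega)).1 (le_refl (chiOf p k))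
  rw [hp.chiOf_le_iff (by omega) hkN, partialSum_succ]
  rcases hS.lt_or_eq with hlt | heq
  · omega
  · have := hp.part_pos_of_partialSum_lt (i := chiOf p k) (by omega)
    omega

lemma chiOf_le_self (hp : IsPartitionOf N p) {k : ℕ} (hk : 1 ≤ k) (hkN : k ≤ N) :
    chiOf p k ≤ k := by
  induction k, hk using Nat.le_induction with
  | base =>
    rw [hp.chiOf_le_iff le_rfl hkN, partialSum_one]
    exact hp.part_pos_of_partialSum_lt (i := 0) (by simp; omega)
  | succ k hk ih =>
    have := hp.chiOf_succ_le hk hkN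
    have := ih (by omega)
    omega

lemma chiOf_two (hp : IsPartitionOf N p) (hN : 2 ≤ N) (hp1 : 2 ≤ p 1) : chiOf p 2 = 1 := by
  have hle : chiOf p 2 ≤ 1 := by
    rwa [hp.chiOf_le_iff (by omega) hN, partialSum_one]
  have := hp.chiOf_pos (by omega) hN
  omega

lemma partialSum_lt_of_lt_chiOf (hp : IsPartitionOf N p) {k i : ℕ} (hk : 1 ≤ k) (hkN : k ≤ N)
    (hi : i < chiOf p k) : partialSum p i < k :=
  lt_of_not_ge fun h => (hp.chiOf_le_iff hk hkN).2 h |>.not_gt hi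

lemma lt_part_chiOf (hp : IsPartitionOf N p) {k m : ℕ} (hk : 1 ≤ k) (hkm : k + m ≤ N)
    (hflat : chiOf p (k + m) ≤ chiOf p k) : m < p (chiOf p k) := by
  obtain ⟨c, hc⟩ : ∃ c, chiOf p k = c + 1 :=
    ⟨chiOf p k - 1, by have := hp.chiOf_pos hk (by omega); omega⟩
  have hkm_le := (hp.chiOf_le_iff (by omega) hkm).1 (hflat.trans hc.le)
  have hk_gt := hp.partialSum_lt_of_lt_chiOf hk (by omega) (i := c) (by omega)
  rw [partialSum_succ] at hkm_le
  rw [hc]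
  omega

lemma add_one_mul_chiOf_sub_one_lt (hp : IsPartitionOf N p) {k m : ℕ} (hk : 1 ≤ k)
    (hkm : k + m ≤ N) (hflat : chiOf p (k + m) ≤ chiOf p k) :
    (m + 1) * (chiOf p k - 1) < k := by
  have hpart := hp.lt_part_chiOf hk hkm hflat
  obtain ⟨c, hc⟩ : ∃ c, chiOf p k = c + 1 :=
    ⟨chiOf p k - 1, by have := hp.chiOf_pos hk (by omega); omega⟩
  have hk_gt := hp.partialSum_lt_of_lt_chiOf hk (by omega) (i := c) (by omega)
  rw [hc] at hpart ⊢
  calc (m + 1) * (c + 1 - 1) = c * (m + 1) := by rw [Nat.add_sub_cancel, mul_comm]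
    _ ≤ c * p (c + 1) := Nat.mul_le_mul_left c hpart
    _ ≤ partialSum p c := hp.mul_part_succ_le_partialSum c
    _ < k := hk_gt

lemma chiOf_add_two_le_of_chiOf_add_three_le (hp : IsPartitionOf N p) {k : ℕ} (hk : 1 ≤ k)
    (hkN : k + 3 ≤ N) (hflat : chiOf p (k + 3) ≤ chiOf p (k + 2)) :
    chiOf p (k + 2) ≤ chiOf p k + 1 := by
  have hpart := hp.lt_part_chiOf (m := 1) (by omega) hkN hflat
  by_contra! hlt
  have hk_le := (hp.chiOf_le_iff hk (by omega)).1 (le_refl (chiOf p k))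
  have hanti := hp.part_antitone (by omega : 1 ≤ chiOf p k + 1) hlt.le
  have hk2_le : k + 2 ≤ partialSum p (chiOf p k + 1) := by
    rw [partialSum_succ]
    omega
  have := (hp.chiOf_le_iff (by omega) (by omega)).2 hk2_le
  omega

lemma exists_gap_add_two (hp : IsPartitionOf N p) {k : ℕ} (hk : 1 ≤ k) (hkN : k + 2 ≤ N) :
    ∃ u v : ℕ, v ≤ u ∧ k + 2 - chiOf p (k + 2) = k - chiOf p k + u + v ∧
      (k - 1) * (3 * u + v) ≤ 6 * (k - chiOf p k) := by
  have hle := hp.chiOf_le_self hk (by omega)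
  have hm₁ := hp.chiOf_mono hk (by omega : k ≤ k + 1) (by omega)
  have hm₂ := hp.chiOf_mono (k := k + 1) (k' := k + 2) (by omega) (by omega) hkN
  have hs₁ := hp.chiOf_succ_le hk (by omega)
  have hs₂ : chiOf p (k + 2) ≤ chiOf p (k + 1) + 1 := hp.chiOf_succ_le (by omega) hkN
  rcases (by omega : chiOf p (k + 1) = chiOf p k ∨ chiOf p (k + 1) = chiOf p k + 1)
    with h₁ | h₁ <;>
  rcases (by omega : chiOf p (k + 2) = chiOf p (k + 1) ∨ chiOf p (k + 2) = chiOf p (k + 1) + 1)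
    with h₂ | h₂
  · have := hp.add_one_mul_chiOf_sub_one_lt (m := 2) hk hkN (by omega)
    exact ⟨1, 1, by omega, by omega, by omega⟩
  · have := hp.add_one_mul_chiOf_sub_one_lt (m := 1) hk (by omega) (by omega)
    exact ⟨1, 0, by omega, by omega, by omega⟩
  · have : (1 + 1) * (chiOf p (k + 1) - 1) < k + 1 :=
      hp.add_one_mul_chiOf_sub_one_lt (by omega) hkN h₂.le
    exact ⟨1, 0, by omega, by omega, by omega⟩
  · exact ⟨0, 0, by omega, by omega, by omega⟩

lemma gap_add_gap_add_three_le (hp : IsPartitionOf N p) {k : ℕ} (hk : 1 ≤ k)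
    (hkN : k + 3 ≤ N) :
    k - chiOf p k + (k + 3 - chiOf p (k + 3)) ≤ 2 * (k + 2 - chiOf p (k + 2)) := by
  have hle := hp.chiOf_le_self hk (by omega)
  have hle₂ : chiOf p (k + 2) ≤ k + 2 := hp.chiOf_le_self (by omega) (by omega)
  have hm := hp.chiOf_mono (k := k + 2) (k' := k + 3) (by omega) (by omega) hkN
  have hs₁ := hp.chiOf_succ_le hk (by omega)
  have hs₂ : chiOf p (k + 2) ≤ chiOf p (k + 1) + 1 := hp.chiOf_succ_le (by omega) (by omega)
  have hs₃ : chiOf p (k + 3) ≤ chiOf p (k + 2) + 1 := hp.chiOf_succ_le (by omega) hkN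
  rcases (by omega : chiOf p (k + 3) = chiOf p (k + 2) ∨ chiOf p (k + 3) = chiOf p (k + 2) + 1)
    with hflat | hstep
  · have := hp.chiOf_add_two_le_of_chiOf_add_three_le hk hkN hflat.le
    omega
  · omega

end IsPartitionOf

section Family

variable {ι : Type*} [Fintype ι] {N : ℕ} {p : ι → ℕ → ℕ}

noncomputable def gapSum (p : ι → ℕ → ℕ) (k : ℕ) : ℕ := ∑ i, (k - chiOf (p i) k)

lemma sum_chiOf_le_iff [Nonempty ι] (hp : ∀ i, IsPartitionOf N (p i)) {k : ℕ} (hk : 1 ≤ k)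
    (hkN : k ≤ N) :
    ∑ i, chiOf (p i) k ≤ (Fintype.card ι - 1) * k ↔ k ≤ gapSum p k := by
  have hsum : gapSum p k + ∑ i, chiOf (p i) k = Fintype.card ι * k := by
    rw [gapSum, ← sum_add_distrib,
      sum_congr rfl fun i _ => Nat.sub_add_cancel ((hp i).chiOf_le_self hk hkN)]
    simp
  have hcard : (Fintype.card ι - 1) * k + k = Fintype.card ι * k := by
    rw [← Nat.succ_mul, Nat.succ_eq_add_one, Nat.sub_add_cancel Fintype.card_pos]
  omega

lemma gapSum_two (hp : ∀ i, IsPartitionOf N (p i)) (hN : 2 ≤ N) (hp1 : ∀ i, 2 ≤ p i 1) :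
    gapSum p 2 = Fintype.card ι := by
  simp [gapSum, fun i => (hp i).chiOf_two hN (hp1 i)]

lemma le_gapSum_of_le_gapSum_add_two (hp : ∀ i, IsPartitionOf N (p i)) {k : ℕ} (hk : 2 ≤ k)
    (hkN : k + 2 ≤ N) (h : k + 2 ≤ gapSum p (k + 2)) : k ≤ gapSum p k := by
  by_contra! hlt
  choose u v hvu hgap hweight using fun i => (hp i).exists_gap_add_two (by omega) hkN
  have hsum : gapSum p (k + 2) = gapSum p k + ∑ i, u i + ∑ i, v i := by
    simp only [gapSum, hgap, sum_add_distrib]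
  have hvu_sum : ∑ i, v i ≤ ∑ i, u i := sum_le_sum fun i _ => hvu i
  have hweight_sum : (k - 1) * (3 * ∑ i, u i + ∑ i, v i) ≤ 6 * gapSum p k := by
    have := sum_le_sum fun i (_ : i ∈ univ) => hweight i
    simp only [← mul_sum, sum_add_distrib] at this
    exact this
  -- `∑ u + ∑ v ≥ 3` and `∑ v ≤ ∑ u` force `∑ u ≥ 2`
  have h7 : (k - 1) * 7 ≤ (k - 1) * (3 * ∑ i, u i + ∑ i, v i) :=
    Nat.mul_le_mul_left _ (by omega)
  omega

lemma le_gapSum_add_two (hp : ∀ i, IsPartitionOf N (p i)) {k : ℕ} (hk : 1 ≤ k)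
    (hkN : k + 3 ≤ N) (h₀ : k ≤ gapSum p k) (h₃ : k + 3 ≤ gapSum p (k + 3)) :
    k + 2 ≤ gapSum p (k + 2) := by
  have := sum_le_sum fun i (_ : i ∈ univ) => (hp i).gap_add_gap_add_three_le hk hkN
  simp only [sum_add_distrib, ← mul_sum] at this
  change gapSum p k + gapSum p (k + 3) ≤ 2 * gapSum p (k + 2) at this
  omega

end Family

section IndicatorType

variable {N : ℕ} {b : ℕ → Prop}

lemma holds_of_holds_add_mul {s : ℕ} (hstep : ∀ k, 2 ≤ k → k + s ≤ N → b (k + s) → b k) {j : ℕ}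
    (hj : 2 ≤ j) : ∀ d, j + s * d ≤ N → b (j + s * d) → b j
  | 0, _, h => h
  | d + 1, hd, h => by
    rw [Nat.mul_succ, ← add_assoc] at hd h
    exact holds_of_holds_add_mul hstep hj d (by omega) (hstep _ (by omega) hd h)

lemma holds_of_holds_succ (hdown : ∀ k, 2 ≤ k → k + 2 ≤ N → b (k + 2) → b k)
    (hjump : ∀ k, 2 ≤ k → k + 3 ≤ N → b k → b (k + 3) → b (k + 2))
    (h₂ : b 2) (h₃ : 3 ≤ N → b 3) : ∀ k, 2 ≤ k → k + 1 ≤ N → b (k + 1) → b k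
  | 2, _, _, _ => h₂
  | 3, _, hN, _ => h₃ (by omega)
  | j + 4, _, hN, h =>
    hjump (j + 2) (by omega) (by omega)
      (holds_of_holds_succ hdown hjump h₂ h₃ (j + 2) (by omega) (by omega)
        (hdown (j + 3) (by omega) hN h)) h

theorem initialSegment_or_alternating (hN : 2 ≤ N) (h₂ : b 2)
    (hdown : ∀ k, 2 ≤ k → k + 2 ≤ N → b (k + 2) → b k)
    (hjump : ∀ k, 2 ≤ k → k + 3 ≤ N → b k → b (k + 3) → b (k + 2)) :
    (∃ l, 2 ≤ l ∧ ∀ k, 2 ≤ k → k ≤ N → (b k ↔ k ≤ l)) ∨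
    (∃ l, 2 ≤ l ∧ ∀ k, 2 ≤ k → k ≤ N → (b k ↔ Even k ∧ k ≤ l)) := by
  classical
  by_cases h₃ : 3 ≤ N → b 3
  · left
    have hsucc := holds_of_holds_succ hdown hjump h₂ h₃
    refine ⟨Nat.findGreatest b N, Nat.le_findGreatest hN h₂, fun k hk hkN =>
      ⟨Nat.le_findGreatest hkN, fun hkl => ?_⟩⟩
    obtain ⟨d, hd⟩ : ∃ d, Nat.findGreatest b N = k + 1 * d :=
      ⟨Nat.findGreatest b N - k, by omega⟩
    have hl : b (k + 1 * d) := hd ▸ Nat.findGreatest_spec hN h₂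
    exact holds_of_holds_add_mul hsucc hk d (hd ▸ Nat.findGreatest_le N) hl
  · right
    obtain ⟨h₃N, hb₃⟩ := Classical.not_imp.1 h₃
    have h₂' : Even 2 ∧ b 2 := ⟨even_two, h₂⟩
    refine ⟨Nat.findGreatest (fun k => Even k ∧ b k) N, Nat.le_findGreatest hN h₂',
      fun k hk hkN => ⟨fun hbk => ?_, ?_⟩⟩
    · have hke : Even k := by
        by_contra hodd
        rw [Nat.not_even_iff_odd, Nat.odd_iff] at hodd
        obtain ⟨d, rfl⟩ : ∃ d, k = 3 + 2 * d := ⟨(k - 3) / 2, by omega⟩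
        exact hb₃ (holds_of_holds_add_mul hdown (by omega) d hkN hbk)
      exact ⟨hke, Nat.le_findGreatest hkN ⟨hke, hbk⟩⟩
    · rintro ⟨⟨x, hx⟩, hkl⟩
      obtain ⟨⟨y, hy⟩, hl⟩ : Even (Nat.findGreatest (fun k => Even k ∧ b k) N) ∧
          b (Nat.findGreatest (fun k => Even k ∧ b k) N) :=
        Nat.findGreatest_spec (P := fun k => Even k ∧ b k) hN h₂'
      obtain ⟨d, hd⟩ : ∃ d, Nat.findGreatest (fun k => Even k ∧ b k) N = k + 2 * d :=
        ⟨y - x, by omega⟩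
      rw [hd] at hl
      exact holds_of_holds_add_mul hdown hk d (hd ▸ Nat.findGreatest_le N) hl

end IndicatorType

/-- for `n` nonzero partitions, the center-parameter indicator
`b_k = 1 ⇔ ∑ᵢ χ⁽ⁱ⁾_k ≤ (n−1)k` on `{2,…,N}` is of initial-segment type or of
alternating type. -/
theorem center_indicator_type
    (N n : ℕ) (hN : 2 ≤ N) (hn : 2 ≤ n)
    (p χ : Fin n → ℕ → ℕ)
    (h : ∀ i, IsVanishingOrderSeq N (p i) (χ i) ∧ 2 ≤ p i 1) :
    (∃ l, 2 ≤ l ∧ ∀ k, 2 ≤ k → k ≤ N → ((∑ i, χ i k) ≤ (n - 1) * k ↔ k ≤ l)) ∨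
    (∃ l, 2 ≤ l ∧ ∀ k, 2 ≤ k → k ≤ N → ((∑ i, χ i k) ≤ (n - 1) * k ↔ Even k ∧ k ≤ l)) := by
  have hp : ∀ i, IsPartitionOf N (p i) := fun i => (h i).1.1
  have : NeZero n := ⟨by omega⟩
  have hb : ∀ k, 2 ≤ k → k ≤ N → ((∑ i, χ i k) ≤ (n - 1) * k ↔ k ≤ gapSum p k) := by
    intro k hk hkN
    rw [sum_congr rfl fun i _ => (h i).1.2 k (by omega) hkN]
    simpa only [Fintype.card_fin] using sum_chiOf_le_iff hp (by omega) hkN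
  refine initialSegment_or_alternating (b := fun k => (∑ i, χ i k) ≤ (n - 1) * k) hN ?_
    (fun k hk hkN hk₂ => ?_) (fun k hk hkN hk₀ hk₃ => ?_)
  · rw [hb 2 le_rfl hN, gapSum_two hp hN fun i => (h i).2, Fintype.card_fin]
    exact hn
  · exact (hb k hk (by omega)).2
      (le_gapSum_of_le_gapSum_add_two hp hk hkN ((hb (k + 2) (by omega) (by omega)).1 hk₂))
  · exact (hb (k + 2) (by omega) (by omega)).2 (le_gapSum_add_two hp (by omega) hkN
      ((hb k hk (by omega)).1 hk₀) ((hb (k + 3) (by omega) hkN).1 hk₃))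
end

section
/- Let N ≥ 2, n ≥ 2, and let χ⁽¹⁾,…,χ⁽ⁿ⁾ be the vanishing-order sequences of n nonzero partitions of N. Then the nodal sequence satisfies χ_k := max(1, ∑_{i=1}^{n} χ⁽ⁱ⁾_k − (n−1)k) ≤ max(1, k − n) for every k ∈ {1,…,N}. (In particular, for n = 2 the nodal orbit is never smaller than the orbit [3, 1^{N−3}], whose vanishing orders are max(1, k−2).) -/
namespace IsPartitionOf

variable {N : ℕ} {p : ℕ → ℕ}

lemma antitoneOn_Ici (hp : IsPartitionOf N p) : AntitoneOn p (Set.Ici 1) :=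
  antitoneOn_of_succ_le Set.ordConnected_Ici fun i _ hi _ => by
    simpa only [Order.succ_eq_add_one] using hp.1 i hi

lemma sum_Icc_eq_of_eq_zero (hp : IsPartitionOf N p) {i : ℕ} (hi : 1 ≤ i) (hiN : i ≤ N)
    (hzero : p i = 0) : ∑ j ∈ Finset.Icc 1 i, p j = N := by
  rw [← hp.2.1]
  refine Finset.sum_subset (Finset.Icc_subset_Icc_right hiN) fun j hj hj' => ?_
  simp only [Finset.mem_Icc] at hj hj'
  exact Nat.eq_zero_of_le_zero (hzero ▸ hp.antitoneOn_Ici hi (Set.mem_Ici.2 hj.1) (by omega))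

lemma min_le_sum_Icc (hp : IsPartitionOf N p) (h2 : 2 ≤ p 1) {i : ℕ} (hi : 1 ≤ i) :
    min N (i + 1) ≤ ∑ j ∈ Finset.Icc 1 i, p j := by
  induction i, hi using Nat.le_induction with
  | base => simpa using min_le_of_right_le h2
  | succ i hi ih =>
    rw [Finset.sum_Icc_succ_top (by omega)]
    by_cases hiN : N ≤ i
    · have hsub := Finset.sum_le_sum_of_subset (f := p)
        (Finset.Icc_subset_Icc_right (a := 1) hiN)
      rw [hp.2.1] at hsub
      omega
    · rcases Nat.eq_zero_or_pos (p (i + 1)) with hzero | hpos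
      · have := hp.sum_Icc_eq_of_eq_zero (by omega) (by omega) hzero
        rw [Finset.sum_Icc_succ_top (by omega)] at this
        omega
      · omega

end IsPartitionOf

lemma chiOf_le {p : ℕ → ℕ} {k i : ℕ} (hi : 1 ≤ i) (hk : k ≤ ∑ j ∈ Finset.Icc 1 i, p j) :
    chiOf p k ≤ i :=
  Nat.sInf_le ⟨hi, hk⟩

lemma chiOf_le_max_one_sub_one {N : ℕ} {p : ℕ → ℕ} (hp : IsPartitionOf N p) (h2 : 2 ≤ p 1)
    {k : ℕ} (hkN : k ≤ N) : chiOf p k ≤ max 1 (k - 1) := by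
  refine chiOf_le (le_max_left _ _) ?_
  have := hp.min_le_sum_Icc h2 (le_max_left 1 (k - 1))
  omega

lemma max_one_sub_le_of_le_mul {n k s : ℤ} (hk : 1 ≤ k) (hs : s ≤ n * max 1 (k - 1)) :
    max 1 (s - (n - 1) * k) ≤ max 1 (k - n) := by
  refine max_le (le_max_left _ _) ?_
  rcases eq_or_lt_of_le hk with rfl | hk2
  · rw [max_eq_left (by norm_num)] at hs
    linarith [le_max_left 1 (1 - n)]
  · rw [max_eq_right (by omega)] at hs
    linarith [le_max_right 1 (k - n)]

theorem nodal_sequence_upper_bound_general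
    (N n : ℕ)
    (p χ : Fin n → ℕ → ℕ)
    (h : ∀ i, IsVanishingOrderSeq N (p i) (χ i) ∧ 2 ≤ p i 1) :
    ∀ k, 1 ≤ k → k ≤ N →
      max 1 ((∑ i, (χ i k : ℤ)) - ((n : ℤ) - 1) * (k : ℤ)) ≤ max 1 ((k : ℤ) - (n : ℤ)) := by
  intro k hk hkN
  have hχ : ∀ i, (χ i k : ℤ) ≤ max 1 ((k : ℤ) - 1) := fun i => by
    obtain ⟨⟨hp, hχp⟩, h2⟩ := h i
    have := chiOf_le_max_one_sub_one hp h2 hkN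
    rw [hχp k hk hkN]
    omega
  refine max_one_sub_le_of_le_mul (by exact_mod_cast hk) ?_
  calc (∑ i, (χ i k : ℤ)) ≤ ∑ _i : Fin n, max 1 ((k : ℤ) - 1) :=
        Finset.sum_le_sum fun i _ => hχ i
    _ = n * max 1 ((k : ℤ) - 1) := by simp

/-- the nodal sequence is bounded above by `max(1, k − n)`; in particular,
for `n = 2` the nodal orbit is never smaller than `[3, 1^{N−3}]`. -/
theorem nodal_sequence_upper_bound
    (N n : ℕ) (hN : 2 ≤ N) (hn : 2 ≤ n)
    (p χ : Fin n → ℕ → ℕ)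
    (h : ∀ i, IsVanishingOrderSeq N (p i) (χ i) ∧ 2 ≤ p i 1) :
    ∀ k, 1 ≤ k → k ≤ N →
      max 1 ((∑ i, (χ i k : ℤ)) - ((n : ℤ) - 1) * (k : ℤ)) ≤ max 1 ((k : ℤ) - (n : ℤ)) :=
  nodal_sequence_upper_bound_general N n p χ h
end
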